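/- arXiv:1705.05934 — 2 statements merged into one kernel-verified Lean document; each statement's English description precedes it below -/
import Mathlib

section
/- Fix 1 ≤ ℓ ≤ N. Then: (a) there exist R > 0 and a real sequence (r_n)_{n≥0} with r_0 = 1/ρ_ℓ such that ∑_{n=0}^∞ r_n q^{−n} converges absolutely for every q ∈ ℂ with |q| > R and 1/ζ_ℓ(q) = ∑_{n=0}^∞ r_n q^{−n} for every real q > R; (b) if in addition ρ_1 > 1, there exist R > 0 and a real sequence (s_n)_{n≥0} with s_0 = 1/(ρ_ℓ − 1) such that ∑_{n=0}^∞ s_n q^{−n} converges absolutely for |q| > R and 1/(ζ_ℓ(q) − 1) = ∑_{n=0}^∞ s_n q^{−n} for every real q > R. Analogously, for each 1 ≤ ℓ ≤ N̂ there exist such series with 1/ζ̂_ℓ(q) = ∑_{n=0}^∞ r̂_n q^{−n} (r̂_0 = 1/ρ̂_ℓ) and 1/(ζ̂_ℓ(q) + 1) = ∑_{n=0}^∞ ŝ_n q^{−n} (ŝ_0 = 1/(ρ̂_ℓ + 1)) for all real q > R, both series converging absolutely for |q| > R. -/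
/-!
Near `ρ_ℓ` the exponent has a simple pole: `ψ z = h z / (ρ_ℓ - z)` with `h` analytic at `ρ_ℓ` and
`h ρ_ℓ = ρ_ℓ a_ℓ ≠ 0`. Hence `1/ψ = (ρ_ℓ - z) / h z` is analytic at `ρ_ℓ` with nonzero derivative
there, and has an analytic local inverse `G` with `G 0 = ρ_ℓ`. Since `ψ` is bounded above on
`(ρ_{ℓ-1}, ρ_ℓ - ε]`, the root `ζ_ℓ(q)` tends to `ρ_ℓ` as `q → ∞`, so `ζ_ℓ(q) = G(1/q)` for large `q`,
and `1/(ζ_ℓ(q) - t)` is the Taylor series at `0` of the analytic function `u ↦ 1/(G u - t)`,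
evaluated at `u = 1/q`; taking real parts gives real coefficients. The roots `-ζ̂_ℓ(q)` are roots
of `z ↦ ψ(-z)`, an exponent of the same shape with the two families of poles exchanged.
-/

/-- The Laplace exponent of a hyperexponential Lévy process, extended to a rational
function on `ℂ`. -/
noncomputable def psi (σ A : ℝ) (N Nh : ℕ) (aa ρ ah ρh : ℕ → ℝ) (z : ℂ) : ℂ :=
  (σ : ℂ) ^ 2 * z ^ 2 / 2 + (A : ℂ) * z
    + z * ∑ ℓ ∈ Finset.Icc 1 N, (aa ℓ : ℂ) / ((ρ ℓ : ℂ) - z)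
    - z * ∑ ℓ ∈ Finset.Icc 1 Nh, (ah ℓ : ℂ) / ((ρh ℓ : ℂ) + z)

open Filter Topology Finset

def HasInvPowerSeriesAtTop (f : ℝ → ℝ) (a₀ : ℝ) : Prop :=
  ∃ R > (0 : ℝ), ∃ r : ℕ → ℝ, r 0 = a₀ ∧
    (∀ q : ℂ, R < ‖q‖ → Summable (fun n : ℕ => ‖(r n : ℂ) * q ^ (-(n : ℤ))‖)) ∧
    (∀ q : ℝ, R < q → f q = ∑' n : ℕ, r n * q ^ (-(n : ℤ)))

theorem hasInvPowerSeriesAtTop_of_analyticAt {φ : ℂ → ℂ} (hφ : AnalyticAt ℂ φ 0) {f : ℝ → ℝ}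
    (hf : ∀ᶠ q : ℝ in atTop, (f q : ℂ) = φ (q : ℂ)⁻¹) :
    HasInvPowerSeriesAtTop f (φ 0).re := by
  obtain ⟨p, rp, hp⟩ := hφ
  obtain ⟨r₀, hr₀, hr₀p⟩ := ENNReal.lt_iff_exists_nnreal_btwn.1 hp.r_pos
  have hr₀ : (0 : ℝ) < r₀ := by exact_mod_cast hr₀
  obtain ⟨R₀, hR₀⟩ := eventually_atTop.1 hf
  have hsum : Summable fun n => ‖p.coeff n‖ * (r₀ : ℝ) ^ n := by
    simpa only [p.norm_apply_eq_norm_coef] using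
      p.summable_norm_mul_pow (hr₀p.trans_le hp.r_le)
  refine ⟨max (r₀ : ℝ)⁻¹ R₀, lt_max_of_lt_left (inv_pos.2 hr₀), fun n => (p.coeff n).re,
    congrArg Complex.re (hp.coeff_zero 1), fun q hq => ?_, fun q hq => ?_⟩
  · have hq' : ‖q‖⁻¹ ≤ r₀ := inv_le_of_inv_le₀ hr₀ (le_max_left _ _ |>.trans hq.le)
    refine hsum.of_nonneg_of_le (fun n => norm_nonneg _) fun n => ?_
    rw [norm_mul, Complex.norm_real, norm_zpow, zpow_neg, zpow_natCast, ← inv_pow]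
    gcongr
    exact Complex.abs_re_le_norm _
  · have hq0 : 0 < q := (lt_max_of_lt_left (inv_pos.2 hr₀)).trans hq
    have hmem : (q : ℂ)⁻¹ ∈ Metric.eball (0 : ℂ) rp := by
      refine mem_eball_zero_iff.2 (lt_of_le_of_lt ?_ hr₀p)
      rw [← ofReal_norm, ENNReal.ofReal_le_iff_le_toReal ENNReal.coe_ne_top]
      simp only [norm_inv, Complex.norm_real, Real.norm_eq_abs, abs_of_pos hq0, ENNReal.coe_toReal]
      exact inv_le_of_inv_le₀ hr₀ (le_max_left _ _ |>.trans hq.le)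
    have h := Complex.hasSum_re (hp.hasSum hmem)
    simp only [zero_add, FormalMultilinearSeries.apply_eq_pow_smul_coeff, smul_eq_mul] at h
    rw [← Complex.ofReal_re (f q), hR₀ q (le_max_right _ _ |>.trans hq.le), ← h.tsum_eq]
    congr 1 with n
    rw [← Complex.ofReal_inv, ← Complex.ofReal_pow, Complex.re_ofReal_mul, zpow_neg, zpow_natCast,
      inv_pow, mul_comm]

theorem exists_analyticAt_eventually_inv_simplePole {h : ℂ → ℂ} {b : ℂ} (hh : AnalyticAt ℂ h b)
    (hb : h b ≠ 0) :
    ∃ G : ℂ → ℂ, AnalyticAt ℂ G 0 ∧ G 0 = b ∧ ∀ᶠ z in 𝓝 b, G ((b - z) / h z) = z := by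
  set F : ℂ → ℂ := fun z => (b - z) / h z
  have hF : AnalyticAt ℂ F b := (analyticAt_const.sub analyticAt_id).div hh hb
  have hFb : F b = 0 := by simp [F]
  have hF' : deriv F b ≠ 0 := by
    have hd : HasDerivAt F ((-1 * h b - (b - b) * deriv h b) / h b ^ 2) b :=
      ((hasDerivAt_id' b).const_sub b).fun_div hh.differentiableAt.hasDerivAt hb
    rw [hd.deriv]
    simpa using hb
  have hinv := hF.hasStrictDerivAt.eventually_left_inverse hF'
  refine ⟨_, hFb ▸ hF.analyticAt_localInverse hF', ?_, hinv⟩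
  simpa [hFb] using hinv.self_of_nhds

theorem hasInvPowerSeriesAtTop_inv_sub_of_simplePole {f h : ℂ → ℂ} {b t : ℝ}
    (hh : AnalyticAt ℂ h b) (hb : h b ≠ 0) (hf : ∀ z ≠ (b : ℂ), f z = h z / (b - z))
    {ζ : ℝ → ℝ} (hζ : Tendsto ζ atTop (𝓝[≠] b)) (hζf : ∀ᶠ q in atTop, f (ζ q) = q)
    (ht : t ≠ b) :
    HasInvPowerSeriesAtTop (fun q => 1 / (ζ q - t)) (1 / (b - t)) := by
  obtain ⟨G, hG, hG0, hGinv⟩ := exists_analyticAt_eventually_inv_simplePole hh hb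
  have hGt : G 0 - t ≠ 0 := by rw [hG0]; exact_mod_cast sub_ne_zero.2 ht.symm
  have hζC : Tendsto (fun q => (ζ q : ℂ)) atTop (𝓝[≠] (b : ℂ)) :=
    (Complex.continuous_ofReal.continuousWithinAt.tendsto_nhdsWithin
      fun _ hx => by simpa using hx).comp hζ
  have hGζ : ∀ᶠ q : ℝ in atTop, G (q : ℂ)⁻¹ = ζ q := by
    filter_upwards [hζC.eventually (nhdsWithin_le_nhds hGinv),
      hζC.eventually self_mem_nhdsWithin, hζf] with q hGq hζb hfq
    rw [← hfq, hf _ hζb, inv_div]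
    exact hGq
  convert hasInvPowerSeriesAtTop_of_analyticAt ((hG.fun_sub analyticAt_const).fun_inv hGt) ?_
  · rw [hG0, ← Complex.ofReal_sub, ← Complex.ofReal_inv, Complex.ofReal_re, one_div]
  · filter_upwards [hGζ] with q hq
    simp [hq]

theorem pos_of_strictMonoOn_of_map_zero {ρ : ℕ → ℝ} {N : ℕ} (hmono : StrictMonoOn ρ (Set.Iic N))
    (hρ0 : ρ 0 = 0) {j : ℕ} (hj : j ∈ Icc 1 N) : 0 < ρ j :=
  hρ0 ▸ hmono (Set.mem_Iic.2 (Nat.zero_le N)) (Set.mem_Iic.2 (mem_Icc.1 hj).2) (mem_Icc.1 hj).1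

section Psi

variable {σ A : ℝ} {N Nh : ℕ} {aa ρ ah ρh : ℕ → ℝ}

theorem psi_neg (z : ℂ) :
    psi σ A N Nh aa ρ ah ρh (-z) = psi σ (-A) Nh N ah ρh aa ρ z := by
  unfold psi
  push_cast
  simp only [sub_neg_eq_add, ← sub_eq_add_neg]
  ring

theorem psi_ofReal (x : ℝ) :
    psi σ A N Nh aa ρ ah ρh x =
      ((σ ^ 2 * x ^ 2 / 2 + A * x + x * ∑ j ∈ Icc 1 N, aa j / (ρ j - x)
        - x * ∑ j ∈ Icc 1 Nh, ah j / (ρh j + x) : ℝ) : ℂ) := by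
  unfold psi
  push_cast
  ring

theorem psi_eq_add_update {ℓ : ℕ} (hℓ : ℓ ∈ Icc 1 N) (z : ℂ) :
    psi σ A N Nh aa ρ ah ρh z =
      z * aa ℓ / (ρ ℓ - z) + psi σ A N Nh (Function.update aa ℓ 0) ρ ah ρh z := by
  have hrest : ∑ j ∈ (Icc 1 N).erase ℓ, (Function.update aa ℓ 0 j : ℂ) / (ρ j - z) =
      ∑ j ∈ (Icc 1 N).erase ℓ, (aa j : ℂ) / (ρ j - z) :=
    sum_congr rfl fun j hj => by rw [Function.update_of_ne (ne_of_mem_erase hj)]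
  unfold psi
  rw [← add_sum_erase _ _ hℓ, ← add_sum_erase _ _ hℓ, hrest]
  simp only [Function.update_self, Complex.ofReal_zero, zero_div]
  ring

theorem psi_analyticAt {z : ℂ} (hz : ∀ j ∈ Icc 1 N, aa j ≠ 0 → (ρ j : ℂ) - z ≠ 0)
    (hzh : ∀ j ∈ Icc 1 Nh, (ρh j : ℂ) + z ≠ 0) :
    AnalyticAt ℂ (psi σ A N Nh aa ρ ah ρh) z := by
  have hterm : ∀ j ∈ Icc 1 N, AnalyticAt ℂ (fun w : ℂ => (aa j : ℂ) / (ρ j - w)) z := by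
    intro j hj
    by_cases h0 : aa j = 0
    · simpa [h0] using analyticAt_const
    · exact analyticAt_const.div (analyticAt_const.sub analyticAt_id) (hz j hj h0)
  have htermh : ∀ j ∈ Icc 1 Nh, AnalyticAt ℂ (fun w : ℂ => (ah j : ℂ) / (ρh j + w)) z :=
    fun j hj => analyticAt_const.div (analyticAt_const.add analyticAt_id) (hzh j hj)
  have hsum := Finset.analyticAt_fun_sum _ hterm
  have hsumh := Finset.analyticAt_fun_sum _ htermh
  unfold psi
  fun_prop

theorem bddAbove_re_psi_image_Ioc (hpos : ∀ j ∈ Icc 1 N, 0 ≤ aa j)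
    (hposh : ∀ j ∈ Icc 1 Nh, 0 ≤ ah j) (hρh : ∀ j ∈ Icc 1 Nh, 0 < ρh j) (hρ0 : ρ 0 = 0)
    (hmono : StrictMonoOn ρ (Set.Iic N)) {ℓ : ℕ} (hℓ : ℓ ∈ Icc 1 N) {ε : ℝ} (hε : 0 < ε) :
    BddAbove ((fun x : ℝ => (psi σ A N Nh aa ρ ah ρh x).re) '' Set.Ioc (ρ (ℓ - 1)) (ρ ℓ - ε)) := by
  have hℓN := (mem_Icc.1 hℓ).2
  have hρℓ1 : 0 ≤ ρ (ℓ - 1) :=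
    hρ0 ▸ hmono.monotoneOn (Set.mem_Iic.2 (Nat.zero_le N)) (Set.mem_Iic.2 (by omega)) (Nat.zero_le _)
  refine ⟨σ ^ 2 * ρ ℓ ^ 2 / 2 + |A| * ρ ℓ + ρ ℓ * ((∑ j ∈ Icc 1 N, aa j) / ε), ?_⟩
  rintro _ ⟨x, ⟨hxl, hxr⟩, rfl⟩
  have hx0 : 0 < x := hρℓ1.trans_lt hxl
  have hxρ : x < ρ ℓ := by linarith
  have hterm : ∀ j ∈ Icc 1 N, aa j / (ρ j - x) ≤ aa j / ε := by
    intro j hj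
    have hjN := (mem_Icc.1 hj).2
    rcases lt_or_ge j ℓ with hjℓ | hjℓ
    · have : ρ j ≤ ρ (ℓ - 1) :=
        hmono.monotoneOn (Set.mem_Iic.2 hjN) (Set.mem_Iic.2 (by omega)) (by omega)
      exact (div_nonpos_of_nonneg_of_nonpos (hpos j hj) (by linarith)).trans
        (div_nonneg (hpos j hj) hε.le)
    · have : ρ ℓ ≤ ρ j := hmono.monotoneOn (Set.mem_Iic.2 hℓN) (Set.mem_Iic.2 hjN) hjℓ
      exact div_le_div_of_nonneg_left (hpos j hj) hε (by linarith)
  have hsum : x * ∑ j ∈ Icc 1 N, aa j / (ρ j - x) ≤ ρ ℓ * ((∑ j ∈ Icc 1 N, aa j) / ε) :=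
    calc x * ∑ j ∈ Icc 1 N, aa j / (ρ j - x)
        ≤ x * ((∑ j ∈ Icc 1 N, aa j) / ε) := by
          rw [sum_div]; exact mul_le_mul_of_nonneg_left (sum_le_sum hterm) hx0.le
      _ ≤ ρ ℓ * ((∑ j ∈ Icc 1 N, aa j) / ε) :=
          mul_le_mul_of_nonneg_right hxρ.le (div_nonneg (sum_nonneg hpos) hε.le)
  have hsumh : 0 ≤ x * ∑ j ∈ Icc 1 Nh, ah j / (ρh j + x) :=
    mul_nonneg hx0.le (sum_nonneg fun j hj => div_nonneg (hposh j hj) (by linarith [hρh j hj]))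
  have hlin : A * x ≤ |A| * ρ ℓ :=
    (mul_le_mul_of_nonneg_right (le_abs_self A) hx0.le).trans
      (mul_le_mul_of_nonneg_left hxρ.le (abs_nonneg A))
  have hquad : σ ^ 2 * x ^ 2 / 2 ≤ σ ^ 2 * ρ ℓ ^ 2 / 2 := by gcongr
  simp only [psi_ofReal, Complex.ofReal_re]
  linarith

theorem tendsto_nhdsLT_of_psi_eq (hpos : ∀ j ∈ Icc 1 N, 0 ≤ aa j)
    (hposh : ∀ j ∈ Icc 1 Nh, 0 ≤ ah j) (hρh : ∀ j ∈ Icc 1 Nh, 0 < ρh j) (hρ0 : ρ 0 = 0)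
    (hmono : StrictMonoOn ρ (Set.Iic N)) {ℓ : ℕ} (hℓ : ℓ ∈ Icc 1 N) {Z : ℝ → ℝ}
    (hZ : ∀ q : ℝ, 0 < q →
      Z q ∈ Set.Ioo (ρ (ℓ - 1)) (ρ ℓ) ∧ psi σ A N Nh aa ρ ah ρh (Z q) = q) :
    Tendsto Z atTop (𝓝[<] ρ ℓ) := by
  have hZlt : ∀ᶠ q in atTop, Z q < ρ ℓ := by
    filter_upwards [eventually_gt_atTop 0] with q hq using (hZ q hq).1.2
  refine tendsto_nhdsWithin_iff.2 ⟨tendsto_order.2 ⟨fun a ha => ?_, fun a ha => ?_⟩, hZlt⟩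
  · obtain ⟨C, hC⟩ := bddAbove_re_psi_image_Ioc (σ := σ) (A := A) hpos hposh hρh hρ0 hmono hℓ
      (sub_pos.2 ha)
    filter_upwards [eventually_gt_atTop (max 0 C)] with q hq
    obtain ⟨⟨hl, -⟩, hψ⟩ := hZ q ((le_max_left 0 C).trans_lt hq)
    by_contra! hle
    have := hC ⟨Z q, ⟨hl, by linarith⟩, rfl⟩
    simp only [hψ, Complex.ofReal_re] at this
    linarith [le_max_right 0 C]
  · filter_upwards [hZlt] with q hq using hq.trans ha

theorem hasInvPowerSeriesAtTop_inv_sub_root (hpos : ∀ j ∈ Icc 1 N, 0 < aa j)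
    (hposh : ∀ j ∈ Icc 1 Nh, 0 ≤ ah j) (hρh : ∀ j ∈ Icc 1 Nh, 0 < ρh j) (hρ0 : ρ 0 = 0)
    (hmono : StrictMonoOn ρ (Set.Iic N)) {ℓ : ℕ} (hℓ : ℓ ∈ Icc 1 N) {Z : ℝ → ℝ}
    (hZ : ∀ q : ℝ, 0 < q →
      Z q ∈ Set.Ioo (ρ (ℓ - 1)) (ρ ℓ) ∧ psi σ A N Nh aa ρ ah ρh (Z q) = q)
    {t : ℝ} (ht : t ≠ ρ ℓ) :
    HasInvPowerSeriesAtTop (fun q => 1 / (Z q - t)) (1 / (ρ ℓ - t)) := by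
  have hρℓ : 0 < ρ ℓ := pos_of_strictMonoOn_of_map_zero hmono hρ0 hℓ
  have hrest : AnalyticAt ℂ (psi σ A N Nh (Function.update aa ℓ 0) ρ ah ρh) (ρ ℓ) := by
    refine psi_analyticAt (fun j hj hj0 => ?_) (fun j hj => ?_)
    · have hjℓ : j ≠ ℓ := fun h => hj0 (h ▸ Function.update_self ..)
      exact_mod_cast sub_ne_zero.2 fun h => hjℓ (hmono.injOn (Set.mem_Iic.2 (mem_Icc.1 hj).2)
        (Set.mem_Iic.2 (mem_Icc.1 hℓ).2) h)
    · exact_mod_cast (add_pos (hρh j hj) hρℓ).ne'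
  refine hasInvPowerSeriesAtTop_inv_sub_of_simplePole (f := psi σ A N Nh aa ρ ah ρh)
    (h := fun z => z * aa ℓ + (ρ ℓ - z) * psi σ A N Nh (Function.update aa ℓ 0) ρ ah ρh z)
    (by fun_prop) ?_ (fun z hz => ?_)
    ((tendsto_nhdsLT_of_psi_eq (fun j hj => (hpos j hj).le) hposh hρh hρ0 hmono hℓ hZ).mono_right
      (nhdsLT_le_nhdsNE _)) ?_ ht
  · simpa using ⟨hρℓ.ne', (hpos ℓ hℓ).ne'⟩
  · have : (ρ ℓ : ℂ) - z ≠ 0 := sub_ne_zero.2 hz.symm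
    rw [psi_eq_add_update hℓ]
    field_simp
  · filter_upwards [eventually_gt_atTop 0] with q hq using (hZ q hq).2

end Psi

theorem reciprocal_interior_roots_series_general
    (σ A : ℝ) (N Nh : ℕ) (aa ρ ah ρh : ℕ → ℝ)
    (hpos : ∀ ℓ ∈ Finset.Icc 1 N, 0 < aa ℓ)
    (hposh : ∀ ℓ ∈ Finset.Icc 1 Nh, 0 < ah ℓ)
    (hρ0 : ρ 0 = 0) (hρh0 : ρh 0 = 0)
    (hmono : ∀ i j, i < j → j ≤ N → ρ i < ρ j)
    (hmonoh : ∀ i j, i < j → j ≤ Nh → ρh i < ρh j)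
    (ζ ζh : ℕ → ℝ → ℝ)
    (hζ : ∀ ℓ ∈ Finset.Icc 1 N, ∀ q : ℝ, 0 < q →
        ζ ℓ q ∈ Set.Ioo (ρ (ℓ - 1)) (ρ ℓ) ∧
        psi σ A N Nh aa ρ ah ρh (ζ ℓ q : ℂ) = (q : ℂ))
    (hζh : ∀ ℓ ∈ Finset.Icc 1 Nh, ∀ q : ℝ, 0 < q →
        -(ζh ℓ q) ∈ Set.Ioo (-(ρh ℓ)) (-(ρh (ℓ - 1))) ∧
        psi σ A N Nh aa ρ ah ρh (-(ζh ℓ q : ℝ) : ℂ) = (q : ℂ)) :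
    (∀ ℓ ∈ Finset.Icc 1 N,
      -- (a)
      (∃ R > (0 : ℝ), ∃ r : ℕ → ℝ, r 0 = 1 / ρ ℓ ∧
        (∀ q : ℂ, R < ‖q‖ → Summable (fun n : ℕ => ‖(r n : ℂ) * q ^ (-(n : ℤ))‖)) ∧
        (∀ q : ℝ, R < q → 1 / ζ ℓ q = ∑' n : ℕ, r n * q ^ (-(n : ℤ)))) ∧
      -- (b)
      (ρ 1 > 1 →
        ∃ R > (0 : ℝ), ∃ s : ℕ → ℝ, s 0 = 1 / (ρ ℓ - 1) ∧
          (∀ q : ℂ, R < ‖q‖ → Summable (fun n : ℕ => ‖(s n : ℂ) * q ^ (-(n : ℤ))‖)) ∧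
          (∀ q : ℝ, R < q → 1 / (ζ ℓ q - 1) = ∑' n : ℕ, s n * q ^ (-(n : ℤ))))) ∧
    (∀ ℓ ∈ Finset.Icc 1 Nh,
      (∃ R > (0 : ℝ), ∃ rh : ℕ → ℝ, rh 0 = 1 / ρh ℓ ∧
        (∀ q : ℂ, R < ‖q‖ → Summable (fun n : ℕ => ‖(rh n : ℂ) * q ^ (-(n : ℤ))‖)) ∧
        (∀ q : ℝ, R < q → 1 / ζh ℓ q = ∑' n : ℕ, rh n * q ^ (-(n : ℤ)))) ∧
      (∃ R > (0 : ℝ), ∃ sh : ℕ → ℝ, sh 0 = 1 / (ρh ℓ + 1) ∧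
        (∀ q : ℂ, R < ‖q‖ → Summable (fun n : ℕ => ‖(sh n : ℂ) * q ^ (-(n : ℤ))‖)) ∧
        (∀ q : ℝ, R < q → 1 / (ζh ℓ q + 1) = ∑' n : ℕ, sh n * q ^ (-(n : ℤ))))) := by
  have hmonoOn : StrictMonoOn ρ (Set.Iic N) := fun i _ j hj hij => hmono i j hij hj
  have hmonoOnh : StrictMonoOn ρh (Set.Iic Nh) := fun i _ j hj hij => hmonoh i j hij hj
  have hρpos := fun j (hj : j ∈ Icc 1 N) => pos_of_strictMonoOn_of_map_zero hmonoOn hρ0 hj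
  have hρhpos := fun j (hj : j ∈ Icc 1 Nh) => pos_of_strictMonoOn_of_map_zero hmonoOnh hρh0 hj
  have hζh_mirror : ∀ ℓ ∈ Icc 1 Nh, ∀ q : ℝ, 0 < q → ζh ℓ q ∈ Set.Ioo (ρh (ℓ - 1)) (ρh ℓ) ∧
      psi σ (-A) Nh N ah ρh aa ρ (ζh ℓ q) = q := by
    intro ℓ hℓ q hq
    obtain ⟨⟨h1, h2⟩, hψ⟩ := hζh ℓ hℓ q hq
    exact ⟨⟨neg_lt_neg_iff.1 h2, neg_lt_neg_iff.1 h1⟩, by rwa [psi_neg] at hψ⟩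
  have hroot := fun ℓ hℓ (t : ℝ) => hasInvPowerSeriesAtTop_inv_sub_root
    hpos (fun j hj => (hposh j hj).le) hρhpos hρ0 hmonoOn hℓ (hζ ℓ hℓ) (t := t)
  have hrooth := fun ℓ hℓ (t : ℝ) => hasInvPowerSeriesAtTop_inv_sub_root
    hposh (fun j hj => (hpos j hj).le) hρpos hρh0 hmonoOnh hℓ (hζh_mirror ℓ hℓ) (t := t)
  refine ⟨fun ℓ hℓ => ⟨?_, fun hρ1 => ?_⟩, fun ℓ hℓ => ⟨?_, ?_⟩⟩
  · have h := hroot ℓ hℓ 0 (hρpos ℓ hℓ).ne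
    simp only [sub_zero] at h
    exact h
  · refine hroot ℓ hℓ 1 (hρ1.trans_le ?_).ne
    exact hmonoOn.monotoneOn (Set.mem_Iic.2 ((mem_Icc.1 hℓ).1.trans (mem_Icc.1 hℓ).2))
      (Set.mem_Iic.2 (mem_Icc.1 hℓ).2) (mem_Icc.1 hℓ).1
  · have h := hrooth ℓ hℓ 0 (hρhpos ℓ hℓ).ne
    simp only [sub_zero] at h
    exact h
  · have h := hrooth ℓ hℓ (-1) (by linarith [hρhpos ℓ hℓ])
    simp only [sub_neg_eq_add] at h
    exact h

/-- Expansions in powers of `q^{-1}` of `1/ζ_ℓ(q)` (leading coefficient `1/ρ_ℓ`), of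
`1/(ζ_ℓ(q) - 1)` (leading coefficient `1/(ρ_ℓ - 1)`, under `ρ_1 > 1`), and analogously of
`1/ζ̂_ℓ(q)` and `1/(ζ̂_ℓ(q) + 1)`, each converging absolutely for `|q| > R`. -/
theorem reciprocal_interior_roots_series
    (σ A : ℝ) (N Nh : ℕ) (aa ρ ah ρh : ℕ → ℝ)
    (hσ : 0 ≤ σ)
    (hpos : ∀ ℓ ∈ Finset.Icc 1 N, 0 < aa ℓ)
    (hposh : ∀ ℓ ∈ Finset.Icc 1 Nh, 0 < ah ℓ)
    (hρ0 : ρ 0 = 0) (hρh0 : ρh 0 = 0)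
    (hmono : ∀ i j, i < j → j ≤ N → ρ i < ρ j)
    (hmonoh : ∀ i j, i < j → j ≤ Nh → ρh i < ρh j)
    (ζ ζh : ℕ → ℝ → ℝ)
    (hζ : ∀ ℓ ∈ Finset.Icc 1 N, ∀ q : ℝ, 0 < q →
        ζ ℓ q ∈ Set.Ioo (ρ (ℓ - 1)) (ρ ℓ) ∧
        psi σ A N Nh aa ρ ah ρh (ζ ℓ q : ℂ) = (q : ℂ))
    (hζh : ∀ ℓ ∈ Finset.Icc 1 Nh, ∀ q : ℝ, 0 < q →
        -(ζh ℓ q) ∈ Set.Ioo (-(ρh ℓ)) (-(ρh (ℓ - 1))) ∧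
        psi σ A N Nh aa ρ ah ρh (-(ζh ℓ q : ℝ) : ℂ) = (q : ℂ)) :
    (∀ ℓ ∈ Finset.Icc 1 N,
      -- (a)
      (∃ R > (0 : ℝ), ∃ r : ℕ → ℝ, r 0 = 1 / ρ ℓ ∧
        (∀ q : ℂ, R < ‖q‖ → Summable (fun n : ℕ => ‖(r n : ℂ) * q ^ (-(n : ℤ))‖)) ∧
        (∀ q : ℝ, R < q → 1 / ζ ℓ q = ∑' n : ℕ, r n * q ^ (-(n : ℤ)))) ∧
      -- (b)
      (ρ 1 > 1 →
        ∃ R > (0 : ℝ), ∃ s : ℕ → ℝ, s 0 = 1 / (ρ ℓ - 1) ∧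
          (∀ q : ℂ, R < ‖q‖ → Summable (fun n : ℕ => ‖(s n : ℂ) * q ^ (-(n : ℤ))‖)) ∧
          (∀ q : ℝ, R < q → 1 / (ζ ℓ q - 1) = ∑' n : ℕ, s n * q ^ (-(n : ℤ))))) ∧
    (∀ ℓ ∈ Finset.Icc 1 Nh,
      (∃ R > (0 : ℝ), ∃ rh : ℕ → ℝ, rh 0 = 1 / ρh ℓ ∧
        (∀ q : ℂ, R < ‖q‖ → Summable (fun n : ℕ => ‖(rh n : ℂ) * q ^ (-(n : ℤ))‖)) ∧
        (∀ q : ℝ, R < q → 1 / ζh ℓ q = ∑' n : ℕ, rh n * q ^ (-(n : ℤ)))) ∧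
      (∃ R > (0 : ℝ), ∃ sh : ℕ → ℝ, sh 0 = 1 / (ρh ℓ + 1) ∧
        (∀ q : ℂ, R < ‖q‖ → Summable (fun n : ℕ => ‖(sh n : ℂ) * q ^ (-(n : ℤ))‖)) ∧
        (∀ q : ℝ, R < q → 1 / (ζh ℓ q + 1) = ∑' n : ℕ, sh n * q ^ (-(n : ℤ))))) :=
  reciprocal_interior_roots_series_general σ A N Nh aa ρ ah ρh hpos hposh hρ0 hρh0 hmono hmonoh ζ ζh
    hζ hζh
end

section
/- Let n ≥ 1 be an integer and let k, D be reals with either k > 1 and D > 0, or 0 < k < 1 and D < 0; set c := D·log k (so c > 0). Then for every complex q with Re q > 0, ∫_0^∞ e^{−qt} · [ t^{−3/2}/(2√π (n−1)!) · ∫_c^∞ e^{−τ²/(4t)} τ (τ−c)^{n−1} dτ ] dt = e^{−c·q^{1/2}}/q^{n/2}, where q^{1/2} and q^{n/2} are taken with the principal branch of the square root; equivalently, this Laplace transform equals k^{−D·q^{1/2}}/q^{n/2}. -/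
/-!
For real `s > 0` the transform is computed by Fubini: the inner integral is
`∫₀^∞ e^{-st} t^{-3/2} e^{-τ²/(4t)} dt = (2√π/τ) e^{-τ√s}`, which the substitution `t = x⁻²` turns
into the Cauchy–Schlömilch integral `∫₀^∞ e^{-(ax - b/x)²} dx = √π/(2a)`, and what remains is a
Gamma integral in `τ`. Both sides of the identity are holomorphic on `Re q > 0`, the left one as the
complex moment generating function of `t ↦ -t` under the density `phiKernel n c`, so the
identity theorem carries the real identity over to the half-plane.
-/

open MeasureTheory Set Real Filter Topology ProbabilityTheory
open scoped Nat

section CauchySchlomilch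

variable {a b : ℝ}

lemma strictMonoOn_mul_sub_div (ha : 0 < a) (hb : 0 < b) :
    StrictMonoOn (fun x => a * x - b / x) (Ioi 0) := by
  intro x hx y _ hxy
  have : b / y < b / x := div_lt_div_of_pos_left hb hx hxy
  have : a * x < a * y := mul_lt_mul_of_pos_left hxy ha
  dsimp only
  linarith

lemma image_mul_sub_div_Ioi (ha : 0 < a) (hb : 0 < b) :
    (fun x => a * x - b / x) '' Ioi 0 = univ := by
  refine eq_univ_of_forall fun y => ?_
  -- the positive root of `a x² - y x - b`
  set r := √(y ^ 2 + 4 * a * b)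
  have hr : r ^ 2 = y ^ 2 + 4 * a * b := sq_sqrt (by positivity)
  have hyr : |y| < r := by
    rw [← sqrt_sq_eq_abs]
    exact sqrt_lt_sqrt (sq_nonneg _) (by nlinarith)
  have hyr' : 0 < y + r := by linarith [neg_abs_le y]
  refine ⟨(y + r) / (2 * a), div_pos hyr' (by positivity), ?_⟩
  field_simp
  linear_combination hr

lemma integral_add_div_sq_mul_exp_neg_sq_mul_sub_div (ha : 0 < a) (hb : 0 < b) :
    ∫ x in Ioi 0, (a + b / x ^ 2) * exp (-(a * x - b / x) ^ 2) = √π := by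
  have hderiv : ∀ x ∈ Ioi (0 : ℝ),
      HasDerivWithinAt (fun x => a * x - b / x) (a + b / x ^ 2) (Ioi 0) x := by
    intro x hx
    have h : HasDerivAt (fun x => a * x - b * x⁻¹) (a * 1 - b * -(x ^ 2)⁻¹) x :=
      ((hasDerivAt_id x).const_mul a).sub ((hasDerivAt_inv (ne_of_gt hx)).const_mul b)
    simp only [← div_eq_mul_inv] at h
    exact (h.congr_deriv (by ring)).hasDerivWithinAt
  have := integral_image_eq_integral_abs_deriv_smul measurableSet_Ioi hderiv
    (strictMonoOn_mul_sub_div ha hb).injOn fun y => exp (-y ^ 2)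
  rw [image_mul_sub_div_Ioi ha hb, setIntegral_univ] at this
  have hgauss : ∫ y, exp (-y ^ 2) = √π := by simpa using integral_gaussian 1
  rw [← hgauss, this]
  refine setIntegral_congr_fun measurableSet_Ioi fun x (hx : 0 < x) => ?_
  rw [abs_of_pos (by positivity), smul_eq_mul]

lemma integral_comp_div_Ioi {E : Type*} [NormedAddCommGroup E] [NormedSpace ℝ E] (g : ℝ → E)
    {c : ℝ} (hc : 0 < c) : ∫ x in Ioi 0, (c / x ^ 2) • g (c / x) = ∫ x in Ioi 0, g x := by
  have hderiv : ∀ x ∈ Ioi (0 : ℝ), HasDerivWithinAt (fun x => c / x) (-(c / x ^ 2)) (Ioi 0) x := by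
    intro x hx
    have h : HasDerivAt (fun x => c * x⁻¹) (c * -(x ^ 2)⁻¹) x :=
      (hasDerivAt_inv (ne_of_gt hx)).const_mul c
    simp only [← div_eq_mul_inv] at h
    exact (h.congr_deriv (by ring)).hasDerivWithinAt
  have hinj : InjOn (fun x => c / x) (Ioi 0) := fun x _ y _ h => by
    simpa [div_div_cancel₀ hc.ne'] using congrArg (c / ·) h
  have himage : (fun x => c / x) '' Ioi 0 = Ioi 0 := by
    ext y
    refine ⟨?_, fun hy => ⟨c / y, div_pos hc hy, div_div_cancel₀ hc.ne'⟩⟩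
    rintro ⟨x, hx, rfl⟩
    exact div_pos hc hx
  have := integral_image_eq_integral_abs_deriv_smul measurableSet_Ioi hderiv hinj g
  rw [himage] at this
  rw [this]
  refine setIntegral_congr_fun measurableSet_Ioi fun x _ => ?_
  rw [abs_neg, abs_of_nonneg (by positivity)]

/-- Cauchy–Schlömilch: `x ↦ b / (a x)` exchanges the weights `a` and `b / x ^ 2`, whose sum is the
Jacobian of `x ↦ a x - b / x`. -/
lemma integral_exp_neg_sq_mul_sub_div (ha : 0 < a) (hb : 0 < b) :
    ∫ x in Ioi 0, exp (-(a * x - b / x) ^ 2) = √π / (2 * a) := by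
  set F : ℝ → ℝ := fun x => exp (-(a * x - b / x) ^ 2)
  have hsymm : ∫ x in Ioi 0, b / x ^ 2 * F x = ∫ x in Ioi 0, a * F x := by
    rw [← integral_comp_div_Ioi (fun x => a * F x) (div_pos hb ha)]
    refine setIntegral_congr_fun measurableSet_Ioi fun x (hx : 0 < x) => ?_
    have : a * (b / a / x) - b / (b / a / x) = -(a * x - b / x) := by field_simp; ring
    simp only [smul_eq_mul, F, this, neg_sq]
    field_simp
  have hsum := integral_add_div_sq_mul_exp_neg_sq_mul_sub_div ha hb
  have hint : IntegrableOn (fun x => (a + b / x ^ 2) * F x) (Ioi 0) :=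
    .of_integral_ne_zero (by rw [hsum]; positivity)
  have hintA : IntegrableOn (fun x => a * F x) (Ioi 0) := by
    refine hint.mono' (by fun_prop) (ae_of_all _ fun x => ?_)
    rw [norm_of_nonneg (by positivity)]
    gcongr
    exact le_add_of_nonneg_right (by positivity)
  have hintB : IntegrableOn (fun x => b / x ^ 2 * F x) (Ioi 0) :=
    (hint.sub hintA).congr_fun (fun x _ => by simp only [Pi.sub_apply]; ring) measurableSet_Ioi
  simp only [add_mul] at hsum
  rw [integral_add hintA hintB, hsymm, integral_const_mul] at hsum
  field_simp
  linarith

end CauchySchlomilch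

lemma integral_exp_neg_mul_mul_rpow_mul_exp {s τ : ℝ} (hs : 0 < s) (hτ : 0 < τ) :
    ∫ t in Ioi 0, exp (-(s * t)) * (t ^ (-(3 : ℝ) / 2) * exp (-τ ^ 2 / (4 * t)))
      = 2 * √π / τ * exp (-(τ * √s)) := by
  rw [← integral_comp_rpow_Ioi _ (p := -2) (by norm_num)]
  have hpt : ∀ x ∈ Ioi (0 : ℝ),
      (|(-2 : ℝ)| * x ^ ((-2 : ℝ) - 1)) • (exp (-(s * x ^ (-2 : ℝ))) *
        ((x ^ (-2 : ℝ)) ^ (-(3 : ℝ) / 2) * exp (-τ ^ 2 / (4 * x ^ (-2 : ℝ)))))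
      = 2 * (exp (-(τ * √s)) * exp (-(τ / 2 * x - √s / x) ^ 2)) := by
    intro x (hx : 0 < x)
    rw [show (-2 : ℝ) - 1 = -3 by norm_num, ← rpow_mul hx.le,
      show (-2 : ℝ) * (-(3 : ℝ) / 2) = 3 by norm_num]
    simp only [rpow_neg hx.le, rpow_ofNat, abs_neg, abs_two, smul_eq_mul]
    have hexp : exp (-(s * (x ^ 2)⁻¹)) * exp (-τ ^ 2 / (4 * (x ^ 2)⁻¹))
        = exp (-(τ * √s)) * exp (-(τ / 2 * x - √s / x) ^ 2) := by
      rw [← exp_add, ← exp_add]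
      congr 1
      field_simp
      linear_combination 16 * sq_sqrt hs.le
    rw [← hexp, mul_left_comm _ (x ^ 3), mul_assoc, inv_mul_cancel_left₀ (by positivity)]
  rw [setIntegral_congr_fun measurableSet_Ioi hpt, integral_const_mul, integral_const_mul,
    integral_exp_neg_sq_mul_sub_div (by positivity) (sqrt_pos.2 hs)]
  field_simp

lemma integral_comp_add_right_Ioi {E : Type*} [NormedAddCommGroup E] [NormedSpace ℝ E]
    (g : ℝ → E) (a b : ℝ) : ∫ x in Ioi a, g (x + b) = ∫ x in Ioi (a + b), g x := by
  have := (measurePreserving_add_right volume b).setIntegral_preimage_emb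
    (measurableEmbedding_addRight b) g (Ioi (a + b))
  rwa [preimage_add_const_Ioi, add_sub_cancel_right] at this

lemma integral_sub_pow_mul_exp_neg_mul_Ioi (m : ℕ) (c : ℝ) {b : ℝ} (hb : 0 < b) :
    ∫ τ in Ioi c, (τ - c) ^ m * exp (-(b * τ)) = exp (-(b * c)) * m ! / b ^ (m + 1) := by
  rw [← zero_add c, ← integral_comp_add_right_Ioi, zero_add]
  have hpt : ∀ u ∈ Ioi (0 : ℝ), (u + c - c) ^ m * exp (-(b * (u + c)))
      = exp (-(b * c)) * (u ^ ((m + 1 : ℝ) - 1) * exp (-(b * u))) := by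
    intro u _
    rw [add_sub_cancel_right, add_sub_cancel_right, rpow_natCast, mul_add, neg_add, exp_add]
    ring
  rw [setIntegral_congr_fun measurableSet_Ioi hpt, integral_const_mul,
    integral_rpow_mul_exp_neg_mul_Ioi (by positivity) hb, Gamma_nat_eq_factorial,
    ← Nat.cast_add_one, rpow_natCast, one_div, inv_pow]
  field_simp

noncomputable def phiKernel (n : ℕ) (c t : ℝ) : ℝ :=
  t ^ (-(3 : ℝ) / 2) / (2 * √π * (n - 1)!) *
    ∫ τ in Ioi c, exp (-τ ^ 2 / (4 * t)) * τ * (τ - c) ^ (n - 1)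

section RealLaplace

variable {c s : ℝ} (m : ℕ)

lemma integral_mul_exp_neg_mul_mul_rpow_mul_exp (hc : 0 ≤ c) (hs : 0 < s) {τ : ℝ}
    (hτ : c < τ) :
    ∫ t in Ioi 0, τ * (τ - c) ^ m * (exp (-(s * t)) * (t ^ (-(3 : ℝ) / 2) * exp (-τ ^ 2 / (4 * t))))
      = 2 * √π * ((τ - c) ^ m * exp (-(√s * τ))) := by
  have hτ0 : 0 < τ := hc.trans_lt hτ
  rw [integral_const_mul, integral_exp_neg_mul_mul_rpow_mul_exp hs hτ0]
  field_simp

lemma integrable_mul_exp_neg_mul_mul_rpow_mul_exp (hc : 0 ≤ c) (hs : 0 < s) :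
    Integrable (Function.uncurry fun τ t =>
        τ * (τ - c) ^ m * (exp (-(s * t)) * (t ^ (-(3 : ℝ) / 2) * exp (-τ ^ 2 / (4 * t)))))
      ((volume.restrict (Ioi c)).prod (volume.restrict (Ioi 0))) := by
  refine (integrable_prod_iff (by unfold Function.uncurry; fun_prop)).2 ⟨?_, ?_⟩
  · refine (ae_restrict_iff' measurableSet_Ioi).2 (ae_of_all _ fun τ (hτ : c < τ) => ?_)
    refine Integrable.of_integral_ne_zero ?_
    simp only [Function.uncurry_apply_pair]
    rw [integral_mul_exp_neg_mul_mul_rpow_mul_exp m hc hs hτ]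
    have : 0 < τ - c := sub_pos.2 hτ
    positivity
  · have hint : IntegrableOn (fun τ => 2 * √π * ((τ - c) ^ m * exp (-(√s * τ)))) (Ioi c) := by
      refine Integrable.of_integral_ne_zero ?_
      rw [integral_const_mul, integral_sub_pow_mul_exp_neg_mul_Ioi m c (sqrt_pos.2 hs)]
      have := sqrt_pos.2 hs
      positivity
    refine hint.congr_fun (fun τ (hτ : c < τ) => ?_) measurableSet_Ioi
    simp only [Function.uncurry_apply_pair]
    rw [← integral_mul_exp_neg_mul_mul_rpow_mul_exp m hc hs hτ]
    refine setIntegral_congr_fun measurableSet_Ioi fun t (ht : 0 < t) => ?_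
    have hτc : 0 ≤ τ - c := (sub_pos.2 hτ).le
    have hτ0 : 0 ≤ τ := hc.trans hτ.le
    rw [norm_of_nonneg (by positivity)]

lemma integral_exp_neg_mul_mul_phiKernel {n : ℕ} (hn : 1 ≤ n) (hc : 0 ≤ c) (hs : 0 < s) :
    ∫ t in Ioi 0, exp (-(s * t)) * phiKernel n c t = exp (-(c * √s)) / √s ^ n := by
  have hinner : ∀ t, ∫ τ in Ioi c, τ * (τ - c) ^ (n - 1) *
        (exp (-(s * t)) * (t ^ (-(3 : ℝ) / 2) * exp (-τ ^ 2 / (4 * t))))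
      = exp (-(s * t)) * t ^ (-(3 : ℝ) / 2) *
          ∫ τ in Ioi c, exp (-τ ^ 2 / (4 * t)) * τ * (τ - c) ^ (n - 1) := fun t => by
    rw [← integral_const_mul]
    congr 1 with τ
    ring
  calc ∫ t in Ioi 0, exp (-(s * t)) * phiKernel n c t
      = (2 * √π * (n - 1)!)⁻¹ * ∫ t in Ioi 0, ∫ τ in Ioi c, τ * (τ - c) ^ (n - 1) *
          (exp (-(s * t)) * (t ^ (-(3 : ℝ) / 2) * exp (-τ ^ 2 / (4 * t)))) := by
        rw [← integral_const_mul]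
        congr 1 with t
        rw [hinner, phiKernel]
        ring
    _ = (2 * √π * (n - 1)!)⁻¹ * ∫ τ in Ioi c, ∫ t in Ioi 0, τ * (τ - c) ^ (n - 1) *
          (exp (-(s * t)) * (t ^ (-(3 : ℝ) / 2) * exp (-τ ^ 2 / (4 * t)))) := by
        rw [integral_integral_swap (integrable_mul_exp_neg_mul_mul_rpow_mul_exp (n - 1) hc hs)]
    _ = (2 * √π * (n - 1)!)⁻¹ * ∫ τ in Ioi c, 2 * √π * ((τ - c) ^ (n - 1) * exp (-(√s * τ))) := by
        rw [setIntegral_congr_fun measurableSet_Ioi fun τ hτ =>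
          integral_mul_exp_neg_mul_mul_rpow_mul_exp (n - 1) hc hs hτ]
    _ = exp (-(c * √s)) / √s ^ n := by
        rw [integral_const_mul, integral_sub_pow_mul_exp_neg_mul_Ioi _ _ (sqrt_pos.2 hs),
          Nat.sub_add_cancel hn, mul_comm √s c]
        field_simp

end RealLaplace

lemma measurable_phiKernel (n : ℕ) (c : ℝ) : Measurable (phiKernel n c) := by
  have h : StronglyMeasurable
      (Function.uncurry fun t τ => exp (-τ ^ 2 / (4 * t)) * τ * (τ - c) ^ (n - 1)) := by
    apply Measurable.stronglyMeasurable
    unfold Function.uncurry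
    fun_prop
  exact (by fun_prop : Measurable fun t : ℝ => t ^ (-(3 : ℝ) / 2) / (2 * √π * (n - 1)!)).mul
    (h.integral_prod_right' (ν := volume.restrict (Ioi c))).measurable

lemma phiKernel_nonneg (n : ℕ) {c t : ℝ} (hc : 0 ≤ c) (ht : 0 ≤ t) : 0 ≤ phiKernel n c t := by
  refine mul_nonneg (by positivity) (setIntegral_nonneg measurableSet_Ioi fun τ (hτ : c < τ) => ?_)
  have : 0 ≤ τ - c := (sub_pos.2 hτ).le
  have : 0 ≤ τ := hc.trans hτ.le
  positivity

noncomputable def laplaceTransform (f : ℝ → ℂ) (q : ℂ) : ℂ :=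
  ∫ t in Ioi (0 : ℝ), Complex.exp (-q * t) * f t

lemma laplaceTransform_ofReal_eq_complexMGF {g : ℝ → ℝ} (hg : Measurable g)
    (hg_nonneg : ∀ t, 0 < t → 0 ≤ g t) (q : ℂ) :
    laplaceTransform (fun t => (g t : ℂ)) q
      = complexMGF (fun t => -t)
          ((volume.restrict (Ioi 0)).withDensity fun t => .ofReal (g t)) q := by
  rw [complexMGF, integral_withDensity_eq_integral_toReal_smul (by fun_prop)
    (ae_of_all _ fun _ => ENNReal.ofReal_lt_top), laplaceTransform]
  refine setIntegral_congr_fun measurableSet_Ioi fun t (ht : 0 < t) => ?_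
  rw [ENNReal.toReal_ofReal (hg_nonneg t ht), Complex.real_smul, Complex.ofReal_neg, mul_neg,
    neg_mul, mul_comm]

lemma differentiableOn_laplaceTransform_ofReal {g : ℝ → ℝ} (hg : Measurable g)
    (hg_nonneg : ∀ t, 0 < t → 0 ≤ g t)
    (hg_int : ∀ σ : ℝ, 0 < σ → IntegrableOn (fun t => exp (-(σ * t)) * g t) (Ioi 0)) :
    DifferentiableOn ℂ (laplaceTransform fun t => (g t : ℂ)) {q | 0 < q.re} := by
  simp_rw [funext (laplaceTransform_ofReal_eq_complexMGF hg hg_nonneg)]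
  refine differentiableOn_complexMGF.mono fun q (hq : 0 < q.re) => ?_
  refine interior_maximal (fun σ (hσ : 0 < σ) => ?_) isOpen_Ioi hq
  rw [integrableExpSet, mem_ofPred_eq, integrable_withDensity_iff_integrable_smul' (by fun_prop)
    (ae_of_all _ fun _ => ENNReal.ofReal_lt_top)]
  refine (hg_int σ hσ).congr_fun (fun t (ht : 0 < t) => ?_) measurableSet_Ioi
  rw [ENNReal.toReal_ofReal (hg_nonneg t ht), smul_eq_mul, mul_neg, mul_comm]

lemma eqOn_re_pos_of_eq_ofReal {f g : ℂ → ℂ} (hf : DifferentiableOn ℂ f {q | 0 < q.re})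
    (hg : DifferentiableOn ℂ g {q | 0 < q.re}) (hfg : ∀ s : ℝ, 0 < s → f s = g s) :
    EqOn f g {q | 0 < q.re} := by
  have hU : IsOpen {q : ℂ | 0 < q.re} := isOpen_lt continuous_const Complex.continuous_re
  refine (hf.analyticOnNhd hU).eqOn_of_preconnected_of_frequently_eq (hg.analyticOnNhd hU)
    (convex_halfSpace_re_gt 0).isPreconnected (z₀ := 1) (by simp) ?_
  have hreal : Tendsto (fun s : ℝ => (s : ℂ)) (𝓝[≠] 1) (𝓝[≠] 1) :=
    Complex.continuous_ofReal.continuousWithinAt.tendsto_nhdsWithin fun s hs => by simpa using hs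
  refine hreal.frequently (Eventually.frequently ?_)
  filter_upwards [eventually_nhdsWithin_of_eventually_nhds (eventually_gt_nhds one_pos)]
    with s hs using hfg s hs

lemma laplaceTransform_ofReal_ofReal (g : ℝ → ℝ) (s : ℝ) :
    laplaceTransform (fun t => (g t : ℂ)) s = ((∫ t in Ioi 0, exp (-(s * t)) * g t : ℝ) : ℂ) := by
  rw [laplaceTransform, ← integral_complex_ofReal]
  congr 1 with t
  push_cast
  ring_nf

lemma ofReal_cpow_natCast_div_two {s : ℝ} (hs : 0 ≤ s) (n : ℕ) :
    (s : ℂ) ^ ((n : ℂ) / 2) = ((√s ^ n : ℝ) : ℂ) := by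
  rw [sqrt_eq_rpow, ← rpow_natCast, ← rpow_mul hs, Complex.ofReal_cpow hs]
  push_cast
  ring_nf

lemma laplaceTransform_phiKernel {n : ℕ} (hn : 1 ≤ n) {c : ℝ} (hc : 0 ≤ c) {q : ℂ}
    (hq : 0 < q.re) :
    laplaceTransform (fun t => (phiKernel n c t : ℂ)) q
      = Complex.exp (-(c : ℂ) * q ^ (1 / 2 : ℂ)) / q ^ ((n : ℂ) / 2) := by
  refine eqOn_re_pos_of_eq_ofReal (f := laplaceTransform fun t => (phiKernel n c t : ℂ))
    (g := fun q => Complex.exp (-(c : ℂ) * q ^ (1 / 2 : ℂ)) / q ^ ((n : ℂ) / 2)) ?_ ?_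
    (fun s hs => ?_) hq
  · refine differentiableOn_laplaceTransform_ofReal (measurable_phiKernel n c)
      (fun t ht => phiKernel_nonneg n hc ht.le) fun σ hσ => .of_integral_ne_zero ?_
    rw [integral_exp_neg_mul_mul_phiKernel hn hc hσ]
    positivity
  · intro q (hq : 0 < q.re)
    have hslit : q ∈ Complex.slitPlane := Or.inl hq
    refine DifferentiableAt.differentiableWithinAt (.div ?_ ?_ ?_)
    · exact ((differentiableAt_id.cpow (differentiableAt_const _) hslit).const_mul _).cexp
    · exact differentiableAt_id.cpow (differentiableAt_const _) hslit
    · exact Complex.cpow_ne_zero_iff.2 (.inl (Complex.slitPlane_ne_zero hslit))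
  · rw [laplaceTransform_ofReal_ofReal, integral_exp_neg_mul_mul_phiKernel hn hc hs,
      ofReal_cpow_natCast_div_two hs.le, show (1 / 2 : ℂ) = (1 : ℕ) / 2 by norm_num,
      ofReal_cpow_natCast_div_two hs.le]
    push_cast
    ring_nf

/-- The Laplace transform of
`t ↦ t^{-3/2}/(2√π (n-1)!) ∫_c^∞ e^{-τ²/(4t)} τ (τ-c)^{n-1} dτ`, with `c = D log k > 0`, is
`q ↦ e^{-c q^{1/2}}/q^{n/2} = k^{-D q^{1/2}}/q^{n/2}` on the right half-plane (principal
branch of the square root). -/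
theorem laplace_transform_phi_kernel
    (n : ℕ) (hn : 1 ≤ n) (k D : ℝ)
    (hkD : (1 < k ∧ 0 < D) ∨ (0 < k ∧ k < 1 ∧ D < 0))
    (c : ℝ) (hc : c = D * Real.log k)
    (q : ℂ) (hq : 0 < q.re) :
    ∫ t in Set.Ioi (0 : ℝ),
        Complex.exp (-q * t) *
          ((t ^ (-(3 : ℝ) / 2) / (2 * Real.sqrt Real.pi * (Nat.factorial (n - 1) : ℝ)) *
              ∫ τ in Set.Ioi c, Real.exp (-τ ^ 2 / (4 * t)) * τ * (τ - c) ^ (n - 1) : ℝ) : ℂ)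
      = Complex.exp (-(c : ℂ) * q ^ (1 / 2 : ℂ)) / q ^ ((n : ℂ) / 2) := by
  have hc_nonneg : 0 ≤ c := by
    rcases hkD with ⟨hk, hD⟩ | ⟨hk₀, hk₁, hD⟩
    · exact hc ▸ mul_nonneg hD.le (log_pos hk).le
    · exact hc ▸ mul_nonneg_of_nonpos_of_nonpos hD.le (log_neg hk₀ hk₁).le
  exact laplaceTransform_phiKernel hn hc_nonneg hq
end
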